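/- Let (A, Ω) be an algebra, α a congruence on (A, Ω), Θ a congruence on (P^{<ω}_{>0}(A), Ω, ∪) with Θ̃ = α, and ψ a congruence on (P^{<ω}_{>0}(A/α), Ω, ∪) with ψ̃ equal to the identity relation on A/α. Define δ_Θ by (B^α, C^α) ∈ δ_Θ ⟺ (B, C) ∈ Θ and Δ_ψ by (B, C) ∈ Δ_ψ ⟺ (B^α, C^α) ∈ ψ, where Q^α = {q/α | q ∈ Q}. Then δ_Θ and Δ_ψ are well-defined congruences, and Θ = Δ_{δ_Θ} and ψ = δ_{Δ_ψ}. -/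

import Mathlib

/-- `T` is a finite nonempty subset. -/
def finNE {A : Type*} (T : Set A) : Prop := T.Finite ∧ T.Nonempty

/-- The closure operator induced by an equivalence `Θ` on finite nonempty subsets. -/
def CTheta {A : Type*} (Θ : Set A → Set A → Prop) (T : Set A) : Set A :=
  {a : A | ∃ U : Set A, U.Finite ∧ U.Nonempty ∧ U ⊆ T ∧ Θ (U ∪ {a}) U}

/-- The complex (power) operation on subsets induced by an `n`-ary operation `f`. -/
def setOp {A : Type*} {n : ℕ} (f : (Fin n → A) → A) (X : Fin n → Set A) : Set A :=
  {b : A | ∃ x : Fin n → A, (∀ k, x k ∈ X k) ∧ f x = b}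

/-- `Θ` is a congruence on the extended power algebra `(P^{<ω}_{>0}(A), Ω, ∪)`:
an equivalence on finite nonempty subsets compatible with union and with all
complex operations. -/
def PowCong {A : Type*} {ι : Type*} (ar : ι → ℕ) (op : ∀ i, (Fin (ar i) → A) → A)
    (Θ : Set A → Set A → Prop) : Prop :=
  (∀ X : Set A, finNE X → Θ X X) ∧
  (∀ X Y : Set A, Θ X Y → Θ Y X) ∧
  (∀ X Y Z : Set A, Θ X Y → Θ Y Z → Θ X Z) ∧
  (∀ X Y X' Y' : Set A, finNE X → finNE Y → finNE X' → finNE Y' →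
    Θ X X' → Θ Y Y' → Θ (X ∪ Y) (X' ∪ Y')) ∧
  (∀ i, ∀ X Y : Fin (ar i) → Set A, (∀ k, finNE (X k)) → (∀ k, finNE (Y k)) →
    (∀ k, Θ (X k) (Y k)) → Θ (setOp (op i) X) (setOp (op i) Y))

/-- The image of a subset of `A` in the quotient `A/α`: `Q^α = {q/α | q ∈ Q}`. -/
def imQ {A : Type*} (s : Setoid A) (B : Set A) : Set (Quotient s) :=
  (Quotient.mk s) '' B


lemma finNE_union {A : Type*} {X Y : Set A} (hX : finNE X) (hY : finNE Y) : finNE (X ∪ Y) :=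
  ⟨hX.1.union hY.1, hX.2.mono Set.subset_union_left⟩

lemma finNE_singleton {A : Type*} (a : A) : finNE ({a} : Set A) :=
  ⟨Set.finite_singleton a, ⟨a, rfl⟩⟩

lemma finNE_imQ {A : Type*} (s : Setoid A) {B : Set A} (h : finNE B) : finNE (imQ s B) :=
  ⟨h.1.image _, h.2.image _⟩

lemma setOp_eq_image {A : Type*} {n : ℕ} (f : (Fin n → A) → A) (X : Fin n → Set A) :
    setOp f X = f '' (Set.pi Set.univ X) := by
  ext b; simp [setOp, Set.mem_image, Set.mem_pi]

lemma finNE_setOp {A : Type*} {n : ℕ} (f : (Fin n → A) → A) {X : Fin n → Set A}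
    (h : ∀ k, finNE (X k)) : finNE (setOp f X) := by
  rw [setOp_eq_image]
  refine ⟨Set.Finite.image _ (Set.Finite.pi fun k => (h k).1), ?_⟩
  obtain ⟨x, hx⟩ := Classical.axiomOfChoice (fun k => (h k).2)
  exact ⟨f x, ⟨x, by simpa using hx, rfl⟩⟩

lemma imQ_union {A : Type*} (s : Setoid A) (B C : Set A) :
    imQ s (B ∪ C) = imQ s B ∪ imQ s C := Set.image_union _ _ _

lemma imQ_setOp {A : Type*} {n : ℕ} (s : Setoid A) (f : (Fin n → A) → A)
    (fQ : (Fin n → Quotient s) → Quotient s)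
    (hfQ : ∀ x : Fin n → A, fQ (fun k => Quotient.mk s (x k)) = Quotient.mk s (f x))
    (X : Fin n → Set A) :
    imQ s (setOp f X) = setOp fQ (fun k => imQ s (X k)) := by
  ext b
  constructor
  · rintro ⟨a, ⟨x, hx, rfl⟩, rfl⟩
    exact ⟨fun k => Quotient.mk s (x k), fun k => ⟨x k, hx k, rfl⟩, hfQ x⟩
  · rintro ⟨y, hy, rfl⟩
    choose x hx hxe using hy
    have hyx : (fun k => Quotient.mk s (x k)) = y := funext hxe
    exact ⟨f x, ⟨x, hx, rfl⟩, by rw [← hyx, hfQ]⟩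

lemma exists_preimage {A : Type*} (s : Setoid A) {X : Set (Quotient s)} (h : finNE X) :
    ∃ B : Set A, finNE B ∧ imQ s B = X := by
  refine ⟨Quotient.out '' X, ⟨h.1.image _, h.2.image _⟩, ?_⟩
  ext q
  simp only [imQ, Set.image_image, Quotient.out_eq, Set.image_id']

lemma theta_union_absorb {A : Type*} {ι : Type*} {ar : ι → ℕ}
    {op : ∀ i, (Fin (ar i) → A) → A} {s : Setoid A}
    {Θ : Set A → Set A → Prop} (hΘ : PowCong ar op Θ)
    (hΘtilde : ∀ a b : A, Θ {a} {b} ↔ s.r a b)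
    {B : Set A} (hB : finNE B) {C : Set A} (hCfin : C.Finite)
    (hsub : ∀ c ∈ C, ∃ b ∈ B, s.r b c) : Θ (B ∪ C) B := by
  revert hsub
  refine Set.Finite.induction_on
    (motive := fun C _ => (∀ c ∈ C, ∃ b ∈ B, s.r b c) → Θ (B ∪ C) B) C hCfin (fun _ => by simpa using hΘ.1 B hB) ?_
  intro c T hc hT ih hsub
  obtain ⟨b, hbB, hbc⟩ := hsub c (Set.mem_insert _ _)
  have h1 : Θ (B ∪ T) B := ih (fun c hc => hsub c (Set.mem_insert_of_mem _ hc))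
  have h3 : Θ ((B ∪ T) ∪ {c}) (B ∪ {b}) :=
    hΘ.2.2.2.1 _ _ _ _ ⟨hB.1.union hT, hB.2.mono Set.subset_union_left⟩
      (finNE_singleton c) hB (finNE_singleton b) h1
      ((hΘtilde c b).2 (s.symm hbc))
  have he1 : B ∪ insert c T = (B ∪ T) ∪ {c} := by
    ext x; simp [or_comm, or_assoc, or_left_comm]
  have he2 : B ∪ {b} = B := by
    rw [Set.union_singleton, Set.insert_eq_self]; exact hbB
  rw [he2] at h3
  rw [he1]
  exact h3

lemma theta_of_imQ_eq {A : Type*} {ι : Type*} {ar : ι → ℕ}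
    {op : ∀ i, (Fin (ar i) → A) → A} {s : Setoid A}
    {Θ : Set A → Set A → Prop} (hΘ : PowCong ar op Θ)
    (hΘtilde : ∀ a b : A, Θ {a} {b} ↔ s.r a b)
    {B C : Set A} (hB : finNE B) (hC : finNE C)
    (him : imQ s B = imQ s C) : Θ B C := by
  have hsub1 : ∀ c ∈ C, ∃ b ∈ B, s.r b c := by
    intro c hc
    obtain ⟨b, hbB, hb⟩ : Quotient.mk s c ∈ imQ s B := him ▸ ⟨c, hc, rfl⟩
    exact ⟨b, hbB, Quotient.exact hb⟩
  have hsub2 : ∀ b ∈ B, ∃ c ∈ C, s.r c b := by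
    intro b hb
    obtain ⟨c, hcC, hc⟩ : Quotient.mk s b ∈ imQ s C := him ▸ ⟨b, hb, rfl⟩
    exact ⟨c, hcC, Quotient.exact hc⟩
  have h1 : Θ (B ∪ C) B := theta_union_absorb hΘ hΘtilde hB hC.1 hsub1
  have h2 : Θ (C ∪ B) C := theta_union_absorb hΘ hΘtilde hC hB.1 hsub2
  rw [Set.union_comm] at h2
  exact hΘ.2.2.1 _ _ _ (hΘ.2.1 _ _ h1) h2


/-- Theorem 3.14 (with well-definedness, (3.13.1), (3.13.2)): given a congruence `α`
(encoded as the setoid `s`) on `(A,Ω)`, a congruence `Θ` on the extended power algebra of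
`A` with `Θ̃ = α`, and a congruence `ψ` on the extended power algebra of `A/α` with
`ψ̃ = 0_{A/α}`, the relations `δ_Θ` (on `P^{<ω}_{>0}(A/α)`, defined by
`(B^α, C^α) ∈ δ_Θ ⟺ (B,C) ∈ Θ`) and `Δ_ψ` (on `P^{<ω}_{>0}(A)`, defined by
`(B,C) ∈ Δ_ψ ⟺ (B^α, C^α) ∈ ψ`) are well-defined congruences, and
`Θ = Δ_{δ_Θ}` and `ψ = δ_{Δ_ψ}`. -/
theorem stmt15 {A : Type*} {ι : Type*} (ar : ι → ℕ)
    (op : ∀ i, (Fin (ar i) → A) → A) (s : Setoid A)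
    (hcompat : ∀ i, ∀ x y : Fin (ar i) → A,
      (∀ k, s.r (x k) (y k)) → s.r (op i x) (op i y))
    (opQ : ∀ i, (Fin (ar i) → Quotient s) → Quotient s)
    (hopQ : ∀ i, ∀ x : Fin (ar i) → A,
      opQ i (fun k => Quotient.mk s (x k)) = Quotient.mk s (op i x))
    (Θ : Set A → Set A → Prop) (hΘ : PowCong ar op Θ)
    (hΘtilde : ∀ a b : A, Θ {a} {b} ↔ s.r a b)
    (ψ : Set (Quotient s) → Set (Quotient s) → Prop) (hψ : PowCong ar opQ ψ)
    (hψtilde : ∀ a b : Quotient s, ψ {a} {b} ↔ a = b) :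
    -- `δ_Θ` is well defined
    (∀ B C B' C' : Set A, finNE B → finNE C → finNE B' → finNE C' →
      imQ s B = imQ s B' → imQ s C = imQ s C' → Θ B C → Θ B' C') ∧
    -- `δ_Θ` is a congruence on the extended power algebra of `A/α`
    PowCong ar opQ (fun B' C' => ∃ B C : Set A, finNE B ∧ finNE C ∧
      imQ s B = B' ∧ imQ s C = C' ∧ Θ B C) ∧
    -- `Δ_ψ` is a congruence on the extended power algebra of `A`
    PowCong ar op (fun B C => ψ (imQ s B) (imQ s C)) ∧
    -- (3.14.1): `Θ = Δ_{δ_Θ}`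
    (∀ B C : Set A, finNE B → finNE C →
      (Θ B C ↔ ∃ B₀ C₀ : Set A, finNE B₀ ∧ finNE C₀ ∧
        imQ s B₀ = imQ s B ∧ imQ s C₀ = imQ s C ∧ Θ B₀ C₀)) ∧
    -- (3.14.2): `ψ = δ_{Δ_ψ}`
    (∀ B' C' : Set (Quotient s), finNE B' → finNE C' →
      (ψ B' C' ↔ ∃ B C : Set A, finNE B ∧ finNE C ∧ imQ s B = B' ∧ imQ s C = C' ∧
        ψ (imQ s B) (imQ s C))) := by
  have wd : ∀ B C B' C' : Set A, finNE B → finNE C → finNE B' → finNE C' →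
      imQ s B = imQ s B' → imQ s C = imQ s C' → Θ B C → Θ B' C' := by
    intro B C B' C' hB hC hB' hC' h1 h2 h
    exact hΘ.2.2.1 _ _ _ (hΘ.2.2.1 _ _ _ (theta_of_imQ_eq hΘ hΘtilde hB' hB h1.symm) h)
      (theta_of_imQ_eq hΘ hΘtilde hC hC' h2)
  refine ⟨wd, ⟨?_, ?_, ?_, ?_, ?_⟩, ⟨?_, ?_, ?_, ?_, ?_⟩, ?_, ?_⟩
  · intro X hX
    obtain ⟨B, hB, hBX⟩ := exists_preimage s hX
    exact ⟨B, B, hB, hB, hBX, hBX, hΘ.1 B hB⟩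
  · rintro X Y ⟨B, C, hB, hC, hBX, hCY, h⟩
    exact ⟨C, B, hC, hB, hCY, hBX, hΘ.2.1 _ _ h⟩
  · rintro X Y Z ⟨B, C, hB, hC, hBX, hCY, h⟩ ⟨C', D, hC', hD, hC'Y, hDZ, h'⟩
    exact ⟨B, D, hB, hD, hBX, hDZ, hΘ.2.2.1 _ _ _ h (hΘ.2.2.1 _ _ _
      (theta_of_imQ_eq hΘ hΘtilde hC hC' (hCY.trans hC'Y.symm)) h')⟩
  · rintro X Y X' Y' _ _ _ _ ⟨B, B', hB, hB', hBX, hB'X', h1⟩ ⟨C, C', hC, hC', hCY, hC'Y', h2⟩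
    refine ⟨B ∪ C, B' ∪ C', finNE_union hB hC, finNE_union hB' hC', ?_, ?_,
      hΘ.2.2.2.1 _ _ _ _ hB hC hB' hC' h1 h2⟩
    · rw [imQ_union, hBX, hCY]
    · rw [imQ_union, hB'X', hC'Y']
  · intro i X Y hX hY h
    choose B C hB hC hBX hCY hBC using h
    refine ⟨setOp (op i) B, setOp (op i) C, finNE_setOp _ hB, finNE_setOp _ hC, ?_, ?_,
      hΘ.2.2.2.2 i B C hB hC hBC⟩
    · rw [imQ_setOp s (op i) (opQ i) (hopQ i)]
      exact congrArg _ (funext hBX)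
    · rw [imQ_setOp s (op i) (opQ i) (hopQ i)]
      exact congrArg _ (funext hCY)
  · intro X hX
    exact hψ.1 _ (finNE_imQ s hX)
  · intro X Y h
    exact hψ.2.1 _ _ h
  · intro X Y Z h1 h2
    exact hψ.2.2.1 _ _ _ h1 h2
  · intro X Y X' Y' hX hY hX' hY' h1 h2
    show ψ (imQ s (X ∪ Y)) (imQ s (X' ∪ Y'))
    rw [imQ_union, imQ_union]
    exact hψ.2.2.2.1 _ _ _ _ (finNE_imQ s hX) (finNE_imQ s hY) (finNE_imQ s hX')
      (finNE_imQ s hY') h1 h2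
  · intro i X Y hX hY h
    show ψ (imQ s (setOp (op i) X)) (imQ s (setOp (op i) Y))
    rw [imQ_setOp s (op i) (opQ i) (hopQ i), imQ_setOp s (op i) (opQ i) (hopQ i)]
    exact hψ.2.2.2.2 i _ _ (fun k => finNE_imQ s (hX k)) (fun k => finNE_imQ s (hY k)) h
  · intro B C hB hC
    constructor
    · intro h
      exact ⟨B, C, hB, hC, rfl, rfl, h⟩
    · rintro ⟨B₀, C₀, hB₀, hC₀, h1, h2, h⟩
      exact wd B₀ C₀ B C hB₀ hC₀ hB hC h1 h2 h
  · intro B' C' hB' hC'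
    constructor
    · intro h
      obtain ⟨B, hB, hBe⟩ := exists_preimage s hB'
      obtain ⟨C, hC, hCe⟩ := exists_preimage s hC'
      exact ⟨B, C, hB, hC, hBe, hCe, by rw [hBe, hCe]; exact h⟩
    · rintro ⟨B, C, hB, hC, rfl, rfl, h⟩
      exact h
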